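/- The fixed-point set of α in T⁷ equals {x ∈ T⁷ : 2·x_i = 0 for i = 1,2,3,4}, i.e. the set of x whose first four coordinates each lie in {0, ½} ⊂ ℝ/ℤ. Consequently, Fix(α) is the union over ε ∈ {0, ½}⁴ of the 16 sets T_ε = {x ∈ T⁷ : x_i = ε_i for i = 1,2,3,4}; these 16 sets are pairwise disjoint, and each T_ε is homeomorphic to the 3-torus (ℝ/ℤ)³ (so the fixed points of α form 16 disjoint copies of T³). -/

import Mathlib

/-- The 7-torus `T⁷ = (ℝ/ℤ)⁷`. -/
abbrev T7 := Fin 7 → AddCircle (1 : ℝ)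

/-- The class of `½` in `ℝ/ℤ`. -/
noncomputable def half : AddCircle (1 : ℝ) := ((1 / 2 : ℝ) : AddCircle (1 : ℝ))

/-- `α(x) = (−x₁, −x₂, −x₃, −x₄, x₅, x₆, x₇)`. -/
noncomputable def α (x : T7) : T7 := ![-x 0, -x 1, -x 2, -x 3, x 4, x 5, x 6]

/-- `β(x) = (−x₁, ½−x₂, x₃, x₄, −x₅, −x₆, −x₇)`. -/
noncomputable def β (x : T7) : T7 := ![-x 0, half - x 1, x 2, x 3, -x 4, -x 5, -x 6]

/-- `γ(x) = (½−x₁, x₂, ½−x₃, x₄, −x₅, x₆, −x₇)`. -/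
noncomputable def γ (x : T7) : T7 := ![half - x 0, x 1, half - x 2, x 3, -x 4, x 5, -x 6]

/-- The 3-torus `T_ε = {x ∈ T⁷ : x_i = ε_i for i = 1,2,3,4}`. -/
def Tset (ε : Fin 4 → AddCircle (1 : ℝ)) : Set T7 :=
  {x | ∀ i : Fin 4, x (Fin.castLE (by norm_num) i) = ε i}

/-- The index set `{0, ½}⁴` of the 16 fixed 3-tori of `α`. -/
noncomputable def Eps : Set (Fin 4 → AddCircle (1 : ℝ)) :=
  {ε | ∀ i, ε i = 0 ∨ ε i = half}

/-! Negation fixes a point of `ℝ/ℤ` exactly when the point is 2-torsion, i.e. `0` or `½`. Hence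
`Fix(α)` is the preimage of `{0, ½}⁴` under the projection `T⁷ → T⁴` onto the first four
coordinates, and each fibre of that projection is a copy of the remaining factor `T³`. -/

namespace AddCircle

variable {𝕜 : Type*} [Field 𝕜] [LinearOrder 𝕜] [IsStrictOrderedRing 𝕜] {p : 𝕜} [Fact (0 < p)]

theorem coe_half_period_ne_zero : ((p / 2 : 𝕜) : AddCircle p) ≠ 0 := by
  have h := addOrderOf_div_of_gcd_eq_one (p := p) two_pos (Nat.gcd_one_left 2)
  rw [Nat.cast_one, Nat.cast_two, one_div_mul_eq_div] at h
  intro h0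
  rw [h0, addOrderOf_zero] at h
  norm_num at h

theorem two_nsmul_eq_zero_iff {u : AddCircle p} :
    2 • u = 0 ↔ u = 0 ∨ u = ((p / 2 : 𝕜) : AddCircle p) := by
  rw [AddCircle.nsmul_eq_zero_iff two_pos]
  constructor
  · rintro ⟨m, hm, rfl⟩
    interval_cases m
    · left; simp
    · right; congr 1; push_cast; ring
  · rintro (rfl | rfl)
    · exact ⟨0, two_pos, by simp⟩
    · exact ⟨1, one_lt_two, by congr 1; push_cast; ring⟩

end AddCircle

theorem neg_eq_self_iff_two_nsmul_eq_zero {G : Type*} [AddGroup G] {x : G} :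
    -x = x ↔ 2 • x = 0 := by
  rw [neg_eq_iff_add_eq_zero, two_nsmul]

theorem Set.ncard_setOf_forall_eq_or_eq {ι α : Type*} [Fintype ι] {a b : α} (hab : a ≠ b) :
    {f : ι → α | ∀ i, f i = a ∨ f i = b}.ncard = 2 ^ Fintype.card ι := by
  have hpair : Nat.card {x : α // x = a ∨ x = b} = 2 := by
    rw [← Set.ncard_pair hab, ← Nat.card_coe_set_eq]; rfl
  rw [← Nat.card_coe_set_eq]
  change Nat.card {f : ι → α // ∀ i, f i = a ∨ f i = b} = _
  rw [Nat.card_congr (Equiv.subtypePiEquivPi (p := fun _ x => x = a ∨ x = b)), Nat.card_pi]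
  simp [hpair]

def Fin.fiberCastAddHomeomorph {X : Type*} [TopologicalSpace X] {m n : ℕ} (ε : Fin m → X) :
    {x : Fin (m + n) → X | ∀ i, x (Fin.castAdd n i) = ε i} ≃ₜ (Fin n → X) where
  toFun x j := x.1 (Fin.natAdd m j)
  invFun y := ⟨Fin.append ε y, fun i => Fin.append_left ε y i⟩
  left_inv x := by
    ext i
    refine Fin.addCases (fun i => ?_) (fun j => ?_) i
    · simp [x.2 i]
    · simp
  right_inv y := by ext j; simp
  continuous_toFun := continuous_pi fun _ => (continuous_apply _).comp continuous_subtype_val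
  continuous_invFun := by fun_prop

theorem half_ne_zero : half ≠ 0 := by
  rw [half]; exact AddCircle.coe_half_period_ne_zero

theorem two_nsmul_eq_zero_iff_eq_zero_or_eq_half {u : AddCircle (1 : ℝ)} :
    2 • u = 0 ↔ u = 0 ∨ u = half := by
  rw [half]; exact AddCircle.two_nsmul_eq_zero_iff

theorem α_eq_self_iff (x : T7) :
    α x = x ↔ ∀ i : Fin 4, 2 • x (Fin.castLE (by norm_num) i) = 0 := by
  simp [α, funext_iff, Fin.forall_fin_succ, neg_eq_self_iff_two_nsmul_eq_zero]

theorem Tset_disjoint {ε ε' : Fin 4 → AddCircle (1 : ℝ)} (h : ε ≠ ε') :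
    Disjoint (Tset ε) (Tset ε') :=
  Set.disjoint_left.2 fun _ hx hx' => h (funext fun i => (hx i).symm.trans (hx' i))

theorem setOf_α_eq_self_eq_iUnion_Tset : {x : T7 | α x = x} = ⋃ ε ∈ Eps, Tset ε := by
  ext x
  simp only [Set.mem_ofPred_eq, Set.mem_iUnion, exists_prop, α_eq_self_iff,
    two_nsmul_eq_zero_iff_eq_zero_or_eq_half]
  exact ⟨fun h => ⟨_, h, fun _ => rfl⟩, fun ⟨_, hε, hx⟩ i => hx i ▸ hε i⟩

/-- The fixed-point set of `α` in `T⁷` is `{x : 2·x_i = 0 for i = 1,2,3,4}`; it is the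
union of the 16 pairwise disjoint sets `T_ε`, `ε ∈ {0,½}⁴`, each homeomorphic to the
3-torus `(ℝ/ℤ)³`. -/
theorem stmt5 :
    ({x : T7 | α x = x} =
      {x : T7 | ∀ i : Fin 4, 2 • x (Fin.castLE (by norm_num) i) = 0}) ∧
    ({x : T7 | α x = x} = ⋃ ε ∈ Eps, Tset ε) ∧
    (∀ ε ∈ Eps, ∀ ε' ∈ Eps, ε ≠ ε' → Disjoint (Tset ε) (Tset ε')) ∧
    Eps.ncard = 16 ∧
    (∀ ε ∈ Eps, Nonempty (Tset ε ≃ₜ (Fin 3 → AddCircle (1 : ℝ)))) :=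
  ⟨Set.ext α_eq_self_iff,
    setOf_α_eq_self_eq_iUnion_Tset,
    fun _ _ _ _ => Tset_disjoint,
    Set.ncard_setOf_forall_eq_or_eq half_ne_zero.symm,
    fun ε _ => ⟨Fin.fiberCastAddHomeomorph (n := 3) ε⟩⟩
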